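/- arXiv:2604.06640 — 2 statements merged into one kernel-verified Lean document; each statement's English description precedes it below -/
import Mathlib

section
/- Let C be a germ of analytic curve in (ℂ²,0) with m+n+1 pairwise transversal smooth branches with tangent slopes ρ₁, …, ρ_{m+n+1} (pairwise distinct), quadratic coefficients a = (a₁,…,a_{m+n+1}), and let V be the (m+n+1)×4 Vandermonde matrix with rows (1, ρ_i, ρ_i², ρ_i³). If H is an analytic change of coordinates tangent to the identity with quadratic part (𝐜,𝐝) = (c₀x²+c₁xy+c₂y², d₀x²+d₁xy+d₂y²), then the vector of quadratic coefficients of the branches of H(C) equals a + V·(d₀, d₁−c₀, d₂−c₁, −c₂)ᵀ. Consequently, the set of quadratic-coefficient vectors of curves of the form H(C), over all tangent-to-identity changes of coordinates H, is exactly the affine subspace a + Im(V). -/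
open Asymptotics Filter Topology

/-- Second-order Taylor expansion at `0`. -/
abbrev T2 (f : ℂ → ℂ) (a₀ a₁ a₂ : ℂ) : Prop :=
  (fun x => f x - (a₀ + a₁ * x + a₂ * x ^ 2)) =o[𝓝 (0 : ℂ)] fun x => x ^ 2

lemma littleO_eval_zero {f g : ℂ → ℂ} (h : f =o[𝓝 (0 : ℂ)] g) (hg : g 0 = 0) : f 0 = 0 := by
  have h1 := (h.def one_pos).self_of_nhds
  rw [hg] at h1
  simp only [norm_zero, mul_zero] at h1
  exact norm_le_zero_iff.1 h1

lemma const_mul_pow_o {c : ℂ} {k : ℕ}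
    (h : (fun x : ℂ => c * x ^ k) =o[𝓝 (0 : ℂ)] fun x => x ^ k) : c = 0 := by
  by_contra hc
  have hc0 : (0:ℝ) < ‖c‖ := by simpa [norm_pos_iff] using hc
  have h2 := h.def (show (0:ℝ) < ‖c‖ / 2 by linarith)
  have h3 : ∀ᶠ x : ℂ in 𝓝[≠] 0, False := by
    filter_upwards [h2.filter_mono nhdsWithin_le_nhds, self_mem_nhdsWithin] with x hx hx0
    rw [norm_mul, norm_pow] at hx
    have hx1 : (0:ℝ) < ‖x‖ := by simpa [norm_pos_iff] using (show x ≠ 0 from hx0)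
    have hxk : (0:ℝ) < ‖x‖ ^ k := by positivity
    nlinarith
  obtain ⟨x, hx⟩ := h3.exists
  exact hx

lemma poly_o2 {b₀ b₁ b₂ : ℂ}
    (h : (fun x : ℂ => b₀ + b₁ * x + b₂ * x ^ 2) =o[𝓝 (0 : ℂ)] fun x => x ^ 2) :
    b₀ = 0 ∧ b₁ = 0 ∧ b₂ = 0 := by
  have hb₀ : b₀ = 0 := by
    have := littleO_eval_zero h (by simp)
    simpa using this
  subst hb₀
  have hO : (fun x : ℂ => x ^ 2) =O[𝓝 (0:ℂ)] fun x => x :=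
    (isLittleO_pow_id one_lt_two).isBigO
  have hb₁ : b₁ = 0 := by
    have h1 : (fun x : ℂ => 0 + b₁ * x + b₂ * x ^ 2) =o[𝓝 (0:ℂ)] fun x => x :=
      h.trans_isBigO hO
    have h2 : (fun x : ℂ => b₂ * x ^ 2) =o[𝓝 (0:ℂ)] fun x => x :=
      (isLittleO_pow_id one_lt_two).const_mul_left b₂
    have h3 := h1.sub h2
    have h4 : (fun x : ℂ => b₁ * x ^ 1) =o[𝓝 (0:ℂ)] fun x => x ^ 1 := by
      refine h3.congr (fun x => by ring) (fun x => by ring)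
    exact const_mul_pow_o h4
  subst hb₁
  refine ⟨rfl, rfl, ?_⟩
  exact const_mul_pow_o (h.congr (fun x => by ring) (fun x => rfl))

lemma T2.unique {f : ℂ → ℂ} {a₀ a₁ a₂ b₀ b₁ b₂ : ℂ}
    (h1 : T2 f a₀ a₁ a₂) (h2 : T2 f b₀ b₁ b₂) : a₀ = b₀ ∧ a₁ = b₁ ∧ a₂ = b₂ := by
  have h3 := h2.sub h1
  have h4 : (fun x : ℂ => (a₀ - b₀) + (a₁ - b₁) * x + (a₂ - b₂) * x ^ 2)
      =o[𝓝 (0:ℂ)] fun x => x ^ 2 :=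
    h3.congr (fun x => by ring) (fun x => rfl)
  obtain ⟨e0, e1, e2⟩ := poly_o2 h4
  exact ⟨by linear_combination e0, by linear_combination e1, by linear_combination e2⟩

lemma T2.congr_ev {f g : ℂ → ℂ} {a₀ a₁ a₂ : ℂ} (hfg : f =ᶠ[𝓝 (0:ℂ)] g)
    (h : T2 f a₀ a₁ a₂) : T2 g a₀ a₁ a₂ := by
  refine h.congr' ?_ EventuallyEq.rfl
  filter_upwards [hfg] with x hx
  rw [hx]

lemma analyticAt_T2 {f : ℂ → ℂ} (hf : AnalyticAt ℂ f 0) :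
    T2 f (f 0) (deriv f 0) (iteratedDeriv 2 f 0 / 2) := by
  obtain ⟨p, hp⟩ := hf
  obtain ⟨r, hr⟩ := hp
  have hp : HasFPowerSeriesAt f p 0 := ⟨r, hr⟩
  have c0 : p.coeff 0 = f 0 := hp.coeff_zero 1
  have c1 : p.coeff 1 = deriv f 0 := (hp.deriv).symm
  have c2 : p.coeff 2 = iteratedDeriv 2 f 0 / 2 := by
    have h2 := hr.factorial_smul (y := (1 : ℂ)) 2
    rw [iteratedDeriv_eq_iteratedFDeriv, ← h2]
    show p.coeff 2 = (Nat.factorial 2 • (p 2) fun _ => 1) / 2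
    have h3 : (Nat.factorial 2 • (p 2) fun _ => 1) = (2 : ℂ) * p.coeff 2 := by
      rw [show Nat.factorial 2 = 2 from rfl, nsmul_eq_mul]
      norm_num
    rw [h3]
    ring
  have hO := hp.isBigO_sub_partialSum_pow 3
  have hno : (fun y : ℂ => ‖y‖ ^ 3) =o[𝓝 (0:ℂ)] fun y => y ^ 2 := by
    have h1 : (fun y : ℂ => ‖y‖ ^ 3) =o[𝓝 (0:ℂ)] fun y => ‖y‖ ^ 2 :=
      isLittleO_norm_pow_norm_pow (by norm_num)
    refine h1.trans_isBigO (isBigO_of_le _ fun x => ?_)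
    simp [Real.norm_eq_abs, abs_pow, norm_pow]
  have key : (fun y : ℂ => f (0 + y) - p.partialSum 3 y) =o[𝓝 (0:ℂ)] fun y => y ^ 2 :=
    hO.trans_isLittleO hno
  have hps : ∀ y : ℂ, p.partialSum 3 y =
      f 0 + deriv f 0 * y + (iteratedDeriv 2 f 0 / 2) * y ^ 2 := by
    intro y
    rw [← c0, ← c1, ← c2]
    simp [FormalMultilinearSeries.partialSum, Finset.sum_range_succ,
      FormalMultilinearSeries.apply_eq_pow_smul_coeff, smul_eq_mul]
    ring
  refine key.congr (fun y => ?_) (fun y => rfl)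
  rw [hps y, zero_add]

lemma T2.bigO_id {f : ℂ → ℂ} {f₁ f₂ : ℂ} (h : T2 f 0 f₁ f₂) :
    f =O[𝓝 (0:ℂ)] fun x => x := by
  have h1 : (fun x : ℂ => f x - (0 + f₁ * x + f₂ * x ^ 2)) =O[𝓝 (0:ℂ)] fun x => x :=
    (h.isBigO).trans (isLittleO_pow_id one_lt_two).isBigO
  have ha : (fun x : ℂ => f₁ * x) =O[𝓝 (0:ℂ)] fun x => x :=
    (isBigO_refl _ _).const_mul_left f₁
  have hb : (fun x : ℂ => f₂ * x ^ 2) =O[𝓝 (0:ℂ)] fun x => x :=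
    ((isLittleO_pow_id one_lt_two).isBigO).const_mul_left f₂
  exact ((h1.add ha).add hb).congr_left fun x => by ring

lemma T2.tendsto0 {f : ℂ → ℂ} {f₁ f₂ : ℂ} (h : T2 f 0 f₁ f₂) :
    Filter.Tendsto f (𝓝 (0:ℂ)) (𝓝 (0:ℂ)) :=
  h.bigO_id.trans_tendsto (by simpa using (continuous_id'.tendsto (0:ℂ)))

lemma hx32 : (fun x : ℂ => x * x ^ 2) =O[𝓝 (0:ℂ)] fun x => x ^ 2 :=
  ((isLittleO_pow_pow (show 2 < 3 by norm_num)).isBigO).congr_left fun x => by ring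

lemma T2.mul {f g : ℂ → ℂ} {f₁ f₂ g₁ g₂ : ℂ} (hf : T2 f 0 f₁ f₂) (hg : T2 g 0 g₁ g₂) :
    T2 (fun x => f x * g x) 0 0 (f₁ * g₁) := by
  have hfO1 : f =O[𝓝 (0:ℂ)] (fun _ => (1:ℂ)) := hf.tendsto0.isBigO_one ℂ
  have hfo1 : f =o[𝓝 (0:ℂ)] (fun _ => (1:ℂ)) := (isLittleO_one_iff ℂ).2 hf.tendsto0
  have t1 : (fun x => f x * (g x - (0 + g₁ * x + g₂ * x ^ 2))) =o[𝓝 (0:ℂ)]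
      fun x => x ^ 2 := by
    have := hfO1.mul_isLittleO hg
    simpa using this
  have t2 : (fun x : ℂ => g₁ * (x * (f x - (0 + f₁ * x + f₂ * x ^ 2)))) =o[𝓝 (0:ℂ)]
      fun x => x ^ 2 := by
    have h1 := (isBigO_refl (fun x : ℂ => x) (𝓝 (0:ℂ))).mul_isLittleO hf
    exact ((h1.trans_isBigO hx32).const_mul_left g₁)
  have t3 : (fun x : ℂ => f₂ * g₁ * x ^ 3) =o[𝓝 (0:ℂ)] fun x => x ^ 2 :=
    (isLittleO_pow_pow (show 2 < 3 by norm_num)).const_mul_left _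
  have t4 : (fun x : ℂ => g₂ * (x ^ 2 * f x)) =o[𝓝 (0:ℂ)] fun x => x ^ 2 := by
    have h1 := (isBigO_refl (fun x : ℂ => x ^ 2) (𝓝 (0:ℂ))).mul_isLittleO hfo1
    simpa using h1.const_mul_left g₂
  have hsum := ((t1.add t2).add t3).add t4
  exact hsum.congr (fun x => by ring) fun x => rfl

lemma T2.comp {g u : ℂ → ℂ} {g₁ g₂ u₂ : ℂ} (hg : T2 g 0 g₁ g₂) (hu : T2 u 0 1 u₂) :
    T2 (fun x => g (u x)) 0 g₁ (g₂ + g₁ * u₂) := by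
  have huO : u =O[𝓝 (0:ℂ)] fun x => x := hu.bigO_id
  have hu2O : (fun x => u x ^ 2) =O[𝓝 (0:ℂ)] fun x => x ^ 2 :=
    (huO.mul huO).congr (fun x => by ring) fun x => by ring
  have t1 : (fun x => g (u x) - (0 + g₁ * u x + g₂ * u x ^ 2)) =o[𝓝 (0:ℂ)]
      fun x => x ^ 2 := by
    have h1 := hg.comp_tendsto hu.tendsto0
    exact h1.trans_isBigO hu2O
  have t2 : (fun x : ℂ => g₁ * (u x - (0 + 1 * x + u₂ * x ^ 2))) =o[𝓝 (0:ℂ)]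
      fun x => x ^ 2 := hu.const_mul_left g₁
  have t3 : (fun x : ℂ => g₂ * ((u x - x) * (u x + x))) =o[𝓝 (0:ℂ)] fun x => x ^ 2 := by
    have hd : (fun x : ℂ => u x - x) =O[𝓝 (0:ℂ)] fun x => x ^ 2 := by
      have h1 : (fun x : ℂ => u x - (0 + 1 * x + u₂ * x ^ 2)) =O[𝓝 (0:ℂ)]
          fun x => x ^ 2 := hu.isBigO
      have h2 : (fun x : ℂ => u₂ * x ^ 2) =O[𝓝 (0:ℂ)] fun x => x ^ 2 :=
        (isBigO_refl _ _).const_mul_left u₂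
      exact (h1.add h2).congr_left fun x => by ring
    have hs : (fun x : ℂ => u x + x) =o[𝓝 (0:ℂ)] (fun _ => (1:ℂ)) := by
      refine (isLittleO_one_iff ℂ).2 ?_
      have := hu.tendsto0.add (continuous_id.tendsto (0:ℂ))
      simpa using this
    have := hs.mul_isBigO hd
    have h3 : (fun x : ℂ => (u x + x) * (u x - x)) =o[𝓝 (0:ℂ)] fun x => x ^ 2 := by
      simpa using this
    exact (h3.const_mul_left g₂).congr (fun x => by ring) fun x => rfl
  have hsum := (t1.add t2).add t3
  exact hsum.congr (fun x => by ring) fun x => rfl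

lemma comp_graph_o2 {E : ℂ × ℂ → ℂ}
    (hE : E =o[𝓝 (0 : ℂ × ℂ)] fun p => ‖p‖ ^ 2) {σ : ℂ → ℂ}
    (hσt : Filter.Tendsto σ (𝓝 (0:ℂ)) (𝓝 (0:ℂ))) (hσO : σ =O[𝓝 (0:ℂ)] fun x => x) :
    (fun x => E (x, σ x)) =o[𝓝 (0:ℂ)] fun x => x ^ 2 := by
  have hg : Filter.Tendsto (fun x : ℂ => ((x, σ x) : ℂ × ℂ)) (𝓝 0) (𝓝 0) := by
    rw [show ((0 : ℂ × ℂ)) = ((0:ℂ), (0:ℂ)) from rfl, nhds_prod_eq]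
    exact (continuous_id.tendsto (0:ℂ)).prodMk hσt
  have h1 := hE.comp_tendsto hg
  refine h1.trans_isBigO ?_
  have hx2 : (fun x : ℂ => ‖x‖ ^ 2) =O[𝓝 (0:ℂ)] fun x => x ^ 2 :=
    isBigO_of_le _ fun x => by simp [Real.norm_eq_abs, abs_pow, norm_pow]
  have hs2 : (fun x : ℂ => ‖σ x‖ ^ 2) =O[𝓝 (0:ℂ)] fun x => x ^ 2 := by
    have h2 := (hσO.mul hσO).norm_left
    exact h2.congr (fun x => by rw [norm_mul]; ring) fun x => by ring
  refine (isBigO_of_le _ (fun x => ?_)).trans (hx2.add hs2)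
  simp only [Function.comp_apply]
  have ha : (0:ℝ) ≤ ‖x‖ := norm_nonneg _
  have hb : (0:ℝ) ≤ ‖σ x‖ := norm_nonneg _
  have hmax : ‖((x, σ x) : ℂ × ℂ)‖ = max ‖x‖ ‖σ x‖ := rfl
  rw [Real.norm_eq_abs, Real.norm_eq_abs,
    abs_of_nonneg (by positivity : (0:ℝ) ≤ ‖((x, σ x) : ℂ × ℂ)‖ ^ 2), hmax]
  have hle : (max ‖x‖ ‖σ x‖) ^ 2 ≤ ‖x‖ ^ 2 + ‖σ x‖ ^ 2 := by
    rcases max_cases ‖x‖ ‖σ x‖ with ⟨h, _⟩ | ⟨h, _⟩ <;> rw [h] <;> nlinarith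
  calc (max ‖x‖ ‖σ x‖) ^ 2 ≤ ‖x‖ ^ 2 + ‖σ x‖ ^ 2 := hle
    _ ≤ |‖x‖ ^ 2 + ‖σ x‖ ^ 2| := le_abs_self _

/-- A tangent-to-identity change of coordinates of `(ℂ², 0)` with prescribed quadratic
part and higher-order remainders `E₁, E₂`. -/
noncomputable def quadMap (c₀ c₁ c₂ d₀ d₁ d₂ : ℂ) (E₁ E₂ : ℂ × ℂ → ℂ) :
    ℂ × ℂ → ℂ × ℂ := fun p =>
  (p.1 + (c₀ * p.1 ^ 2 + c₁ * p.1 * p.2 + c₂ * p.2 ^ 2) + E₁ p,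
   p.2 + (d₀ * p.1 ^ 2 + d₁ * p.1 * p.2 + d₂ * p.2 ^ 2) + E₂ p)

/-- `E` is an analytic remainder of order `> 2` at the origin. -/
def HigherOrder (E : ℂ × ℂ → ℂ) : Prop :=
  AnalyticAt ℂ E 0 ∧ Asymptotics.IsLittleO (nhds 0) E (fun p : ℂ × ℂ => ‖p‖ ^ 2)

/-- `σ` parametrizes a smooth analytic branch through `0 ∈ ℂ²` with tangent slope `ρ`. -/
def IsBranch (ρ : ℂ) (σ : ℂ → ℂ) : Prop :=
  AnalyticAt ℂ σ 0 ∧ σ 0 = 0 ∧ deriv σ 0 = ρ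

/-- `H` maps the graph (branch) of `σ` into the graph of `σ'` near the origin. -/
def MapsGraph (H : ℂ × ℂ → ℂ × ℂ) (σ σ' : ℂ → ℂ) : Prop :=
  ∀ᶠ x in nhds (0 : ℂ), (H (x, σ x)).2 = σ' ((H (x, σ x)).1)

lemma key {ρ c₀ c₁ c₂ d₀ d₁ d₂ : ℂ} {E₁ E₂ : ℂ × ℂ → ℂ}
    (hE₁ : HigherOrder E₁) (hE₂ : HigherOrder E₂) {σ σ' : ℂ → ℂ}
    (hσ : IsBranch ρ σ) (hσ' : IsBranch ρ σ')
    (hmap : MapsGraph (quadMap c₀ c₁ c₂ d₀ d₁ d₂ E₁ E₂) σ σ') :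
    iteratedDeriv 2 σ' 0 / 2 =
      iteratedDeriv 2 σ 0 / 2 + (d₀ + (d₁ - c₀) * ρ + (d₂ - c₁) * ρ ^ 2 - c₂ * ρ ^ 3) := by
  obtain ⟨hσa, hσ0, hσd⟩ := hσ
  obtain ⟨hσ'a, hσ'0, hσ'd⟩ := hσ'
  set μ := iteratedDeriv 2 σ 0 / 2 with hμ
  set μ' := iteratedDeriv 2 σ' 0 / 2 with hμ'
  have hT : T2 σ 0 ρ μ := by have := analyticAt_T2 hσa; rwa [hσ0, hσd] at this
  have hT' : T2 σ' 0 ρ μ' := by have := analyticAt_T2 hσ'a; rwa [hσ'0, hσ'd] at this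
  have hid : T2 (fun x : ℂ => x) 0 1 0 :=
    (isLittleO_zero _ _).congr (fun x => by ring) fun x => rfl
  have hxσ : T2 (fun x => x * σ x) 0 0 ρ := by
    have := hid.mul hT
    simpa using this
  have hσσ : T2 (fun x => σ x * σ x) 0 0 (ρ * ρ) := hT.mul hT
  have hσO := hT.bigO_id
  have hσt := hT.tendsto0
  have hE₁o := comp_graph_o2 hE₁.2 hσt hσO
  have hE₂o := comp_graph_o2 hE₂.2 hσt hσO
  set u : ℂ → ℂ :=
    fun x => x + (c₀ * x ^ 2 + c₁ * x * σ x + c₂ * σ x ^ 2) + E₁ (x, σ x) with hu_def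
  set F : ℂ → ℂ :=
    fun x => σ x + (d₀ * x ^ 2 + d₁ * x * σ x + d₂ * σ x ^ 2) + E₂ (x, σ x) with hF_def
  have hTu : T2 u 0 1 (c₀ + c₁ * ρ + c₂ * (ρ * ρ)) := by
    have hsum := ((hxσ.const_mul_left c₁).add (hσσ.const_mul_left c₂)).add hE₁o
    refine hsum.congr (fun x => ?_) fun x => rfl
    simp only [hu_def]
    ring
  have hTF : T2 F 0 ρ (μ + (d₀ + d₁ * ρ + d₂ * (ρ * ρ))) := by
    have hsum := ((hT.add (hxσ.const_mul_left d₁)).add (hσσ.const_mul_left d₂)).add hE₂o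
    refine hsum.congr (fun x => ?_) fun x => rfl
    simp only [hF_def]
    ring
  have hTcomp : T2 (fun x => σ' (u x)) 0 ρ (μ' + ρ * (c₀ + c₁ * ρ + c₂ * (ρ * ρ))) :=
    hT'.comp hTu
  have hFeq : F =ᶠ[𝓝 (0:ℂ)] fun x => σ' (u x) := by
    filter_upwards [hmap] with x hx
    exact hx
  have hTF2 : T2 (fun x => σ' (u x)) 0 ρ (μ + (d₀ + d₁ * ρ + d₂ * (ρ * ρ))) :=
    T2.congr_ev hFeq hTF
  obtain ⟨-, -, h2⟩ := hTcomp.unique hTF2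
  linear_combination h2

lemma exists_branch_image (ρ c₀ c₁ c₂ d₀ d₁ d₂ : ℂ) {σ : ℂ → ℂ} (hσ : IsBranch ρ σ) :
    ∃ σ' : ℂ → ℂ, IsBranch ρ σ' ∧
      MapsGraph (quadMap c₀ c₁ c₂ d₀ d₁ d₂ (fun _ => 0) (fun _ => 0)) σ σ' := by
  obtain ⟨hσa, hσ0, hσd⟩ := hσ
  have hσder : HasDerivAt σ ρ 0 := by
    have := hσa.differentiableAt.hasDerivAt
    rwa [hσd] at this
  set u : ℂ → ℂ := fun x => x + (c₀ * x ^ 2 + c₁ * x * σ x + c₂ * σ x ^ 2) + 0 with hu_def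
  set F : ℂ → ℂ := fun x => σ x + (d₀ * x ^ 2 + d₁ * x * σ x + d₂ * σ x ^ 2) + 0 with hF_def
  have hua : AnalyticAt ℂ u 0 := by
    apply AnalyticAt.add
    apply AnalyticAt.add (analyticAt_id)
    exact ((analyticAt_const.mul ((analyticAt_id).pow 2)).add
      ((analyticAt_const.mul analyticAt_id).mul hσa)).add (analyticAt_const.mul (hσa.pow 2))
    exact analyticAt_const
  have hFa : AnalyticAt ℂ F 0 := by
    apply AnalyticAt.add
    apply AnalyticAt.add hσa
    exact ((analyticAt_const.mul ((analyticAt_id).pow 2)).add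
      ((analyticAt_const.mul analyticAt_id).mul hσa)).add (analyticAt_const.mul (hσa.pow 2))
    exact analyticAt_const
  have hu0 : u 0 = 0 := by simp [hu_def, hσ0]
  have hF0 : F 0 = 0 := by simp [hF_def, hσ0]
  have hud : HasDerivAt u 1 0 := by
    have hbase : HasDerivAt (fun x : ℂ => x + (c₀ * x ^ 2 + c₁ * x * σ x + c₂ * σ x ^ 2))
        (1 + ((c₀ * (2 * 0 ^ 1) + (c₁ * 1 * σ 0 + c₁ * 0 * ρ)) + c₂ * (2 * σ 0 ^ 1 * ρ))) 0 := by
      refine (hasDerivAt_id' (0:ℂ)).add (HasDerivAt.add (HasDerivAt.add ?_ ?_) ?_)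
      · have h := (hasDerivAt_pow 2 (0:ℂ)).const_mul c₀
        refine h.congr_deriv ?_
        norm_num
      · exact ((hasDerivAt_id (0:ℂ)).const_mul c₁).mul hσder
      · exact (hσder.pow 2).const_mul c₂
    have h1 := hbase.add_const 0
    rw [← hu_def] at h1
    refine h1.congr_deriv ?_
    rw [hσ0]; ring
  have hFd : HasDerivAt F ρ 0 := by
    have hbase : HasDerivAt (fun x : ℂ => σ x + (d₀ * x ^ 2 + d₁ * x * σ x + d₂ * σ x ^ 2))
        (ρ + ((d₀ * (2 * 0 ^ 1) + (d₁ * 1 * σ 0 + d₁ * 0 * ρ)) + d₂ * (2 * σ 0 ^ 1 * ρ))) 0 := by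
      refine hσder.add (HasDerivAt.add (HasDerivAt.add ?_ ?_) ?_)
      · have h := (hasDerivAt_pow 2 (0:ℂ)).const_mul d₀
        refine h.congr_deriv ?_
        norm_num
      · exact ((hasDerivAt_id (0:ℂ)).const_mul d₁).mul hσder
      · exact (hσder.pow 2).const_mul d₂
    have h1 := hbase.add_const 0
    rw [← hF_def] at h1
    refine h1.congr_deriv ?_
    rw [hσ0]; ring
  have hstrict : HasStrictDerivAt u 1 0 := by
    have hcd : ContDiffAt ℂ 1 u 0 := hua.contDiffAt
    have h := hcd.hasStrictDerivAt one_ne_zero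
    rwa [hud.deriv] at h
  have hFs := hstrict.hasStrictFDerivAt_equiv one_ne_zero
  set φ := hFs.toOpenPartialHomeomorph u with hφ_def
  have hφcoe : ⇑φ = u := hFs.toOpenPartialHomeomorph_coe
  have hleft : ∀ᶠ x in 𝓝 (0:ℂ), φ.symm (u x) = x := by
    have h := hFs.eventually_left_inverse
    have h2 := hFs.localInverse_def
    rw [h2] at h
    exact h
  have hw0 : φ.symm 0 = 0 := by
    have h := hleft.self_of_nhds
    rwa [hu0] at h
  obtain ⟨p, hp⟩ := hua
  have hpφ : HasFPowerSeriesAt (⇑φ) p 0 := by rwa [hφcoe]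
  have h0src : (0:ℂ) ∈ φ.source := hFs.mem_toOpenPartialHomeomorph_source
  have hp1 : p 1 = (continuousMultilinearCurryFin1 ℂ ℂ ℂ).symm
      (ContinuousLinearEquiv.unitsEquivAut ℂ (Units.mk0 (1:ℂ) one_ne_zero) : ℂ →L[ℂ] ℂ) := by
    have hder : (p 1) (fun _ => (1:ℂ)) = 1 := by
      rw [← hp.deriv, hud.deriv]
    refine ContinuousMultilinearMap.ext fun v => ?_
    have hsm := (p 1).map_smul_univ (fun i => v i) (fun _ => (1:ℂ))
    simp only [smul_eq_mul, mul_one] at hsm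
    rw [show (fun i : Fin 1 => v i) = v from rfl] at hsm
    rw [hsm, hder]
    simp [ContinuousLinearEquiv.unitsEquivAut]
  have hsymm := φ.hasFPowerSeriesAt_symm h0src hpφ hp1
  have hφ0 : φ 0 = 0 := by rw [hφcoe]; exact hu0
  rw [hφ0] at hsymm
  have hwana : AnalyticAt ℂ (⇑φ.symm) 0 := ⟨_, hsymm⟩
  have hwder : HasDerivAt (⇑φ.symm) (deriv (⇑φ.symm) 0) 0 :=
    hwana.differentiableAt.hasDerivAt
  have hwder' : HasDerivAt (⇑φ.symm) (deriv (⇑φ.symm) 0) (u 0) := by rwa [hu0]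
  have hwd1 : deriv (⇑φ.symm) 0 = 1 := by
    have hcomp := hwder'.comp 0 hud
    have hid1 : HasDerivAt (fun x : ℂ => x) (deriv (⇑φ.symm) 0 * 1) 0 := by
      refine (Filter.EventuallyEq.hasDerivAt_iff ?_).1 hcomp
      filter_upwards [hleft] with x hx
      exact hx
    have := hid1.unique (hasDerivAt_id' 0)
    simpa using this
  have hwd : HasDerivAt (⇑φ.symm) 1 0 := by rwa [hwd1] at hwder
  refine ⟨fun y => F (φ.symm y), ⟨?_, ?_, ?_⟩, ?_⟩
  · have hFa' : AnalyticAt ℂ F (φ.symm 0) := by rwa [hw0]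
    exact hFa'.comp hwana
  · show F (φ.symm 0) = 0
    rw [hw0, hF0]
  · have hFd' : HasDerivAt F ρ (φ.symm 0) := by rwa [hw0]
    have hcomp := hFd'.comp 0 hwd
    have : HasDerivAt (fun y => F (φ.symm y)) (ρ * 1) 0 := hcomp
    rw [this.deriv]; ring
  · refine Filter.Eventually.mono hleft fun x hx => ?_
    show F x = F (φ.symm (u x))
    rw [hx]

/-- for a curve `C` with `m+n+1` pairwise transversal smooth branches of
slopes `ρ_i` and quadratic coefficients `a`, and `V` the `(m+n+1) × 4` Vandermonde
matrix with rows `(1, ρ_i, ρ_i², ρ_i³)`: (a) any tangent-to-identity change of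
coordinates with quadratic part `(𝐜, 𝐝)` sends `C` to a curve with quadratic
coefficients `a + V·(d₀, d₁ - c₀, d₂ - c₁, -c₂)ᵀ`; (b) the set of quadratic-coefficient
vectors of the images `H(C)` over all such `H` is exactly the affine subspace
`a + Im V`. -/
theorem stmt11 (m n : ℕ) (ρ : Fin (m + n + 1) → ℂ) (hρ : Function.Injective ρ)
    (σ : Fin (m + n + 1) → ℂ → ℂ) (hσ : ∀ i, IsBranch (ρ i) (σ i))
    (a : Fin (m + n + 1) → ℂ) (ha : ∀ i, a i = iteratedDeriv 2 (σ i) 0 / 2)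
    (V : Matrix (Fin (m + n + 1)) (Fin 4) ℂ) (hV : ∀ i j, V i j = ρ i ^ (j : ℕ)) :
    (∀ c₀ c₁ c₂ d₀ d₁ d₂ : ℂ, ∀ E₁ E₂ : ℂ × ℂ → ℂ,
      HigherOrder E₁ → HigherOrder E₂ →
      ∀ σ' : Fin (m + n + 1) → ℂ → ℂ,
        (∀ i, IsBranch (ρ i) (σ' i) ∧
          MapsGraph (quadMap c₀ c₁ c₂ d₀ d₁ d₂ E₁ E₂) (σ i) (σ' i)) →
        ∀ i, iteratedDeriv 2 (σ' i) 0 / 2 =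
          a i + V.mulVec ![d₀, d₁ - c₀, d₂ - c₁, -c₂] i) ∧
    {b : Fin (m + n + 1) → ℂ |
        ∃ c₀ c₁ c₂ d₀ d₁ d₂ : ℂ, ∃ E₁ E₂ : ℂ × ℂ → ℂ,
          HigherOrder E₁ ∧ HigherOrder E₂ ∧
          ∃ σ' : Fin (m + n + 1) → ℂ → ℂ,
            (∀ i, IsBranch (ρ i) (σ' i) ∧
              MapsGraph (quadMap c₀ c₁ c₂ d₀ d₁ d₂ E₁ E₂) (σ i) (σ' i)) ∧
            b = fun i => iteratedDeriv 2 (σ' i) 0 / 2}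
      = {b : Fin (m + n + 1) → ℂ | ∃ v : Fin 4 → ℂ, b = fun i => a i + V.mulVec v i} := by
  have hmv : ∀ (i : Fin (m + n + 1)) (v : Fin 4 → ℂ), V.mulVec v i =
      v 0 + v 1 * ρ i + v 2 * ρ i ^ 2 + v 3 * ρ i ^ 3 := by
    intro i v
    simp [Matrix.mulVec, dotProduct, Fin.sum_univ_four, hV,
      show ((3:Fin 4):ℕ) = 3 from rfl, show ((2:Fin 4):ℕ) = 2 from rfl,
      show ((1:Fin 4):ℕ) = 1 from rfl, show ((0:Fin 4):ℕ) = 0 from rfl]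
    ring
  have partA : ∀ c₀ c₁ c₂ d₀ d₁ d₂ : ℂ, ∀ E₁ E₂ : ℂ × ℂ → ℂ,
      HigherOrder E₁ → HigherOrder E₂ →
      ∀ σ' : Fin (m + n + 1) → ℂ → ℂ,
        (∀ i, IsBranch (ρ i) (σ' i) ∧
          MapsGraph (quadMap c₀ c₁ c₂ d₀ d₁ d₂ E₁ E₂) (σ i) (σ' i)) →
        ∀ i, iteratedDeriv 2 (σ' i) 0 / 2 =
          a i + V.mulVec ![d₀, d₁ - c₀, d₂ - c₁, -c₂] i := by
    intro c₀ c₁ c₂ d₀ d₁ d₂ E₁ E₂ hE₁ hE₂ σ' hσ' i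
    have h := key hE₁ hE₂ (hσ i) (hσ' i).1 (hσ' i).2
    rw [h, ← ha i, hmv i]
    simp only [Matrix.cons_val_zero, Matrix.cons_val_one, Matrix.head_cons,
      Matrix.cons_val_two, Matrix.tail_cons, Matrix.cons_val_three]
    ring
  refine ⟨partA, ?_⟩
  ext b
  simp only [Set.mem_setOf_eq]
  constructor
  · rintro ⟨c₀, c₁, c₂, d₀, d₁, d₂, E₁, E₂, hE₁, hE₂, σ', hσ', rfl⟩
    exact ⟨![d₀, d₁ - c₀, d₂ - c₁, -c₂],
      funext fun i => partA c₀ c₁ c₂ d₀ d₁ d₂ E₁ E₂ hE₁ hE₂ σ' hσ' i⟩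
  · rintro ⟨v, rfl⟩
    have hH0 : HigherOrder (fun _ : ℂ × ℂ => (0:ℂ)) :=
      ⟨analyticAt_const, isLittleO_zero _ _⟩
    choose σ' hσ'1 hσ'2 using fun i =>
      exists_branch_image (ρ i) 0 0 (-(v 3)) (v 0) (v 1) (v 2) (hσ i)
    refine ⟨0, 0, -(v 3), v 0, v 1, v 2, (fun _ => 0), (fun _ => 0), hH0, hH0,
      σ', fun i => ⟨hσ'1 i, hσ'2 i⟩, ?_⟩
    funext i
    have h := key hH0 hH0 (hσ i) (hσ'1 i) (hσ'2 i)
    rw [h, ← ha i, hmv i]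
    ring
end

section
/- Let y₁, …, y_{s+4} be s+4 pairwise distinct complex numbers and θ₁, …, θ_s ∈ ℂ. Let Λ̃ be the (s+4)×(s+4) matrix whose first s columns have entries 1/(y_i − y_j) for i ≠ j (with diagonal entries θ_j in rows 1 ≤ j ≤ s), and whose last 4 columns are the Vandermonde columns (1, y_i, y_i², y_i³). Then det(Λ̃) = (∏_{s+1 ≤ i < j ≤ s+4}(y_j − y_i)) · θ₁θ₂⋯θ_s + R(θ), where R is a polynomial of total degree at most s−1 in θ₁,…,θ_s with squarefree monomials, whose coefficients are rational functions in y₁,…,y_{s+4} with denominators products of differences y_j − y_i, i ≠ j. In particular, det(Λ̃) is a nonzero polynomial in (θ₁,…,θ_s). -/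
/-!
Write `Λ̃ = Λ₀ + diag(θ₁, …, θ_s, 0, 0, 0, 0)`, where `Λ₀` is `Λ̃` at `θ = 0`. Expanding the
determinant multilinearly in the rows gives the principal-minor expansion
`det Λ̃ = ∑_{T ⊆ {1,…,s}} (∏_{j ∈ T} θ_j) · det Λ₀[Tᶜ, Tᶜ]`, a polynomial in `θ` with squarefree
monomials. For `T = {1,…,s}` the minor is the `4 × 4` Vandermonde matrix of `y_{s+1}, …, y_{s+4}`,
whose determinant is nonzero; so the polynomial is nonzero and, `ℂ` being infinite, does not
vanish everywhere.
-/

open Finset Matrix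

theorem Finset.prod_filter_fst_lt_snd {α M : Type*} [Fintype α] [LinearOrder α]
    [LocallyFiniteOrderTop α] [CommMonoid M] (f : α → α → M) :
    ∏ pr ∈ univ.filter (fun pr : α × α => pr.1 < pr.2), f pr.1 pr.2 =
      ∏ i, ∏ j ∈ Ioi i, f i j := by
  rw [prod_filter, Fintype.prod_prod_type]
  refine prod_congr rfl fun i _ => ?_
  rw [← prod_filter, filter_lt_eq_Ioi]

namespace Matrix

variable {m n R : Type*} [Fintype n] [DecidableEq n] [CommRing R]

theorem det_add_diagonal (M : Matrix n n R) (c : n → R) :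
    (M + diagonal c).det =
      ∑ S : Finset n, (∏ i ∈ S, c i) * (M.submatrix ((↑) : ↥Sᶜ → n) (↑)).det := by
  have hrows : (fun i => (M + diagonal c) i) =
      (fun i => c i • (1 : Matrix n n R) i) + fun i => M i := by
    ext i j
    simp [diagonal_apply, one_apply, add_comm]
  change detRowAlternating.toMultilinearMap (fun i => (M + diagonal c) i) = _
  rw [hrows, MultilinearMap.map_add_univ]
  refine sum_congr rfl fun S _ => ?_
  have h := (detRowAlternating : (n → R) [⋀^n]→ₗ[R] R).map_piecewise_smul c
    (S.piecewise (fun i => (1 : Matrix n n R) i) fun i => M i) S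
  rw [← det_piecewise_one_eq_submatrix_det, piecewise_compl, ← smul_eq_mul]
  convert h using 2
  · ext i : 1
    by_cases hi : i ∈ S <;> simp [hi]
  · rfl

theorem det_add_diagonal_extend_zero [Fintype m] (M : Matrix n n R) (e : m ↪ n) (θ : m → R) :
    (M + diagonal (Function.extend e θ 0)).det =
      ∑ T : Finset m, (∏ j ∈ T, θ j) * (M.submatrix ((↑) : ↥(T.map e)ᶜ → n) (↑)).det := by
  rw [det_add_diagonal]
  refine (Fintype.sum_of_injective (Finset.map e) (Finset.map_injective e) _ _ (fun S hS => ?_)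
    (fun T => ?_)).symm
  · obtain ⟨i, hiS, hi⟩ : ∃ i ∈ S, i ∉ Set.range e := by
      by_contra! h
      obtain ⟨T, -, rfl⟩ := subset_map_iff.1 (fun i hi => by
        obtain ⟨j, rfl⟩ := h i hi
        exact mem_map_of_mem e (mem_univ j) : S ⊆ univ.map e)
      exact hS ⟨T, rfl⟩
    rw [prod_eq_zero hiS (Function.extend_apply' _ _ _ hi), zero_mul]
  · rw [prod_map]
    simp only [e.injective.extend_apply]

theorem det_vandermonde_eq_prod_filter {k : ℕ} (v : Fin k → R) :
    (vandermonde v).det =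
      ∏ pr ∈ univ.filter (fun pr : Fin k × Fin k => pr.1 < pr.2), (v pr.2 - v pr.1) := by
  rw [det_vandermonde, prod_filter_fst_lt_snd fun i j => v j - v i]

end Matrix

namespace MvPolynomial

variable {σ R : Type*}

section CommSemiring

variable [CommSemiring R]

theorem eval_monomial_sum_single (θ : σ → R) (T : Finset σ) (a : R) :
    eval θ (monomial (∑ j ∈ T, Finsupp.single j 1) a) = a * ∏ j ∈ T, θ j := by
  simp [monomial_sum_index, ← X.eq_def]

theorem totalDegree_sum_monomial_sum_single_le {𝒯 : Finset (Finset σ)} {a : Finset σ → R}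
    {n : ℕ} (h𝒯 : ∀ T ∈ 𝒯, T.card ≤ n) :
    (∑ T ∈ 𝒯, monomial (∑ j ∈ T, Finsupp.single j 1) (a T)).totalDegree ≤ n := by
  refine (totalDegree_finsetSum _ _).trans <| Finset.sup_le fun T hT => ?_
  refine (totalDegree_monomial_le _ _).trans (le_of_eq_of_le ?_ (h𝒯 T hT))
  rw [← Finsupp.sum_finsetSum_index (fun _ => rfl) (fun _ _ _ => rfl)]
  simp

theorem exists_eq_sum_single_of_mem_support {𝒯 : Finset (Finset σ)} {a : Finset σ → R}
    {d : σ →₀ ℕ} (hd : d ∈ (∑ T ∈ 𝒯, monomial (∑ j ∈ T, Finsupp.single j 1) (a T)).support) :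
    ∃ T ∈ 𝒯, d = ∑ j ∈ T, Finsupp.single j 1 := by
  classical
  obtain ⟨T, hT, hdT⟩ := mem_biUnion.1 (support_sum hd)
  exact ⟨T, hT, mem_singleton.1 (support_monomial_subset hdT)⟩

theorem le_one_of_mem_support_sum_monomial_sum_single {𝒯 : Finset (Finset σ)}
    {a : Finset σ → R} {d : σ →₀ ℕ}
    (hd : d ∈ (∑ T ∈ 𝒯, monomial (∑ j ∈ T, Finsupp.single j 1) (a T)).support) (j : σ) :
    d j ≤ 1 := by
  classical
  obtain ⟨T, -, rfl⟩ := exists_eq_sum_single_of_mem_support hd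
  simp only [Finsupp.finsetSum_apply, Finsupp.single_apply, sum_ite_eq']
  split_ifs <;> omega

theorem coeff_sum_single_univ_sum_monomial_sum_single [Fintype σ] {𝒯 : Finset (Finset σ)}
    {a : Finset σ → R} (h𝒯 : univ ∉ 𝒯) :
    coeff (∑ j, Finsupp.single j 1)
      (∑ T ∈ 𝒯, monomial (∑ j ∈ T, Finsupp.single j 1) (a T)) = 0 := by
  classical
  refine notMem_support_iff.1 fun hd => ?_
  obtain ⟨T, hT, hTd⟩ := exists_eq_sum_single_of_mem_support hd
  obtain ⟨j, -, hj⟩ := exists_of_ssubset (ssubset_univ_iff.2 (ne_of_mem_of_not_mem hT h𝒯))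
  simpa [Finsupp.finsetSum_apply, Finsupp.single_apply, hj] using congrArg (· j) hTd

end CommSemiring

theorem exists_mul_prod_add_eval_ne_zero [Fintype σ] [CommRing R] [IsDomain R] [Infinite R]
    {V : R} (hV : V ≠ 0) {p : MvPolynomial σ R} (hp : coeff (∑ j, Finsupp.single j 1) p = 0) :
    ∃ θ : σ → R, V * ∏ j, θ j + eval θ p ≠ 0 := by
  classical
  have hQ : monomial (∑ j, Finsupp.single j 1) V + p ≠ 0 := fun h => by
    have := congrArg (coeff (∑ j, Finsupp.single j 1)) h
    rw [coeff_add, hp, add_zero, coeff_monomial, if_pos rfl, coeff_zero] at this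
    exact hV this
  by_contra! h
  exact hQ (funext fun θ => by simp [eval_monomial_sum_single, h θ])

end MvPolynomial

section CauchyVandermonde

variable {K : Type*} [Field K] {s k : ℕ}

/-- The diagonal entries `1 / (y i - y i)` of the first `s` columns are `0` (division by zero),
so this is `Λ̃` at `θ = 0`. -/
def cauchyVandermonde (s k : ℕ) (y : Fin (s + k) → K) : Matrix (Fin (s + k)) (Fin (s + k)) K :=
  of fun i j => if j.1 < s then 1 / (y i - y j) else y i ^ (j.1 - s)

theorem of_eq_cauchyVandermonde_add_diagonal (y : Fin (s + k) → K) (θ : Fin s → K) :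
    (of fun i j : Fin (s + k) =>
        if h : j.1 < s then (if i.1 = j.1 then θ ⟨j.1, h⟩ else 1 / (y i - y j))
        else y i ^ (j.1 - s)) =
      cauchyVandermonde s k y + diagonal (Function.extend (Fin.castAddEmb k) θ 0) := by
  ext i j
  by_cases hij : i = j
  · subst hij
    by_cases hi : i.1 < s
    · simp [cauchyVandermonde, hi]
      exact ((Fin.castAdd_injective s k).extend_apply θ 0 ⟨i, hi⟩).symm
    · simp [cauchyVandermonde, hi]
      exact Function.extend_apply' _ _ _ fun ⟨j, hj⟩ => hi (hj ▸ j.isLt)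
  · simp [cauchyVandermonde, hij, Fin.val_ne_of_ne hij]

theorem cauchyVandermonde_submatrix_compl_castAdd_det (y : Fin (s + k) → K) :
    ((cauchyVandermonde s k y).submatrix
        ((↑) : ↥((univ : Finset (Fin s)).map (Fin.castAddEmb k))ᶜ → Fin (s + k)) (↑)).det =
      (vandermonde fun a => y (Fin.natAdd s a)).det := by
  have hcompl : ∀ i, i ∈ Set.range (Fin.natAdd s) ↔
      i ∈ ((univ : Finset (Fin s)).map (Fin.castAddEmb k))ᶜ := by
    intro i
    simp only [Fin.range_natAdd, Set.mem_ofPred_eq, mem_compl, mem_map, mem_univ, true_and,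
      not_exists, Fin.ext_iff, Fin.coe_castAddEmb, Fin.val_castAdd]
    exact ⟨fun h x hx => by omega, fun h => not_lt.1 fun hi => h ⟨i, hi⟩ rfl⟩
  let e := (Equiv.ofInjective _ (Fin.natAdd_injective k s)).trans
    (Equiv.subtypeEquivRight hcompl)
  rw [← det_submatrix_equiv_self e]
  congr 1
  ext a b
  simp [e, cauchyVandermonde, vandermonde]

end CauchyVandermonde

open MvPolynomial in
/-- for pairwise distinct `y₁, …, y_{s+4}`, the determinant of the
`(s+4) × (s+4)` matrix `Λ̃` whose first `s` columns are Cauchy-like (entries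
`1/(y_i - y_j)` off the diagonal, free parameters `θ_j` on the diagonal of the top
`s × s` corner) and whose last 4 columns are Vandermonde columns `(1, y_i, y_i², y_i³)`,
equals `(∏_{s+1 ≤ i < j ≤ s+4} (y_j - y_i)) · θ₁⋯θ_s + R(θ)` with `R` of total degree
`≤ s - 1` and squarefree monomials; in particular `det Λ̃` is a nonzero polynomial
in `θ`. -/
theorem stmt16 (s : ℕ) (y : Fin (s + 4) → ℂ) (hy : Function.Injective y) :
    ∃ R : MvPolynomial (Fin s) ℂ,
      R.totalDegree ≤ s - 1 ∧
      (∀ d ∈ R.support, ∀ j, d j ≤ 1) ∧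
      (∀ θ : Fin s → ℂ,
        (Matrix.of fun i j : Fin (s + 4) =>
            if h : j.1 < s then
              (if i.1 = j.1 then θ ⟨j.1, h⟩ else 1 / (y i - y j))
            else y i ^ (j.1 - s)).det
          = (∏ pr ∈ univ.filter (fun pr : Fin 4 × Fin 4 => pr.1 < pr.2),
              (y ⟨s + pr.2.1, Nat.add_lt_add_left pr.2.isLt s⟩ -
                y ⟨s + pr.1.1, Nat.add_lt_add_left pr.1.isLt s⟩)) *
              (∏ j, θ j)
            + MvPolynomial.eval θ R) ∧
      ∃ θ : Fin s → ℂ,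
        (Matrix.of fun i j : Fin (s + 4) =>
            if h : j.1 < s then
              (if i.1 = j.1 then θ ⟨j.1, h⟩ else 1 / (y i - y j))
            else y i ^ (j.1 - s)).det ≠ 0 := by
  let D : Finset (Fin s) → ℂ := fun T => ((cauchyVandermonde s 4 y).submatrix
    ((↑) : ↥(T.map (Fin.castAddEmb 4))ᶜ → Fin (s + 4)) (↑)).det
  let R := ∑ T ∈ univ.erase univ, monomial (∑ j ∈ T, Finsupp.single j 1) (D T)
  have hdet : ∀ θ : Fin s → ℂ, (Matrix.of fun i j : Fin (s + 4) =>
      if h : j.1 < s then (if i.1 = j.1 then θ ⟨j.1, h⟩ else 1 / (y i - y j))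
      else y i ^ (j.1 - s)).det = D univ * ∏ j, θ j + eval θ R := fun θ => by
    rw [of_eq_cauchyVandermonde_add_diagonal, det_add_diagonal_extend_zero,
      ← add_sum_erase _ _ (mem_univ univ), map_sum]
    simp only [eval_monomial_sum_single, mul_comm]
    rfl
  have hD : D univ = (vandermonde fun a => y (Fin.natAdd s a)).det :=
    cauchyVandermonde_submatrix_compl_castAdd_det y
  refine ⟨R, totalDegree_sum_monomial_sum_single_le fun T hT => ?_,
    fun _ => le_one_of_mem_support_sum_monomial_sum_single, fun θ => ?_, ?_⟩
  · have := card_lt_card (ssubset_univ_iff.2 (ne_of_mem_erase hT))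
    rw [card_univ, Fintype.card_fin] at this
    omega
  · rw [hdet, hD, det_vandermonde_eq_prod_filter]
    rfl
  · have hV : D univ ≠ 0 := by
      rw [hD, det_vandermonde_ne_zero_iff]
      exact hy.comp (Fin.natAdd_injective 4 s)
    obtain ⟨θ, hθ⟩ := exists_mul_prod_add_eval_ne_zero hV
      (coeff_sum_single_univ_sum_monomial_sum_single (a := D) (notMem_erase _ _))
    exact ⟨θ, by rwa [hdet]⟩
end
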